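/- arXiv:2312.16796 — 3 statements merged into one kernel-verified Lean document; each statement's English description precedes it below -/
import Mathlib

section
/- Let F be a finite field with at least 4 elements and G a subgroup of GL₂(F) that contains a subgroup of order |F| and acts irreducibly on F². Then G contains SL₂(F). -/
/-!
A subgroup `K` of order `|F| = p^k` is a `p`-group, so it fixes a nonzero vector `v` of `F²`
(the number of vectors is divisible by `p` and `0` is fixed), and its elements have determinant
one since `x ^ |F| = x` on `F`. Hence `K` lies in the group `T v` of determinant-one matrices
fixing `v`, which has order `|F|`, so `K = T v ≤ G`. Irreducibility gives `g ∈ G` with `v, g v`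
a basis, and `T v`, `T (g v) = g (T v) g⁻¹` are conjugate, by the change of basis to `v, g v`,
to the upper and lower unitriangular groups, which generate `SL₂(F)`.
-/

open Matrix MulAction

section

variable {n F : Type*} [Fintype n] [Field F]

lemma span_singleton_ne_top [Nontrivial n] {v : n → F} (hv : v ≠ 0) :
    Submodule.span F {v} ≠ ⊤ := by
  intro h
  have := finrank_span_singleton (K := F) hv
  rw [h, finrank_top, Module.finrank_fintype_fun_eq_card] at this
  exact Fintype.one_lt_card.ne' this

lemma exists_linearIndependent_pair [Nontrivial n] {v : n → F} (hv : v ≠ 0) :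
    ∃ w, LinearIndependent F ![v, w] := by
  obtain ⟨w, -, hw⟩ := SetLike.exists_of_lt (span_singleton_ne_top hv).lt_top
  refine ⟨w, (LinearIndependent.pair_iff' hv).mpr fun a ha => hw ?_⟩
  exact ha ▸ Submodule.smul_mem _ a (Submodule.mem_span_singleton_self v)

variable [DecidableEq n]

def slStabilizer (v : n → F) : Subgroup (GL n F) :=
  stabilizer (GL n F) v ⊓ GeneralLinearGroup.det.ker

@[simp]
lemma mem_slStabilizer {v : n → F} {M : GL n F} :
    M ∈ slStabilizer v ↔ (M : Matrix n n F) *ᵥ v = v ∧ (M : Matrix n n F).det = 1 := by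
  simp [slStabilizer, Units.smul_def, Units.ext_iff]

lemma slStabilizer_smul (g : GL n F) (v : n → F) :
    slStabilizer (g • v) = (slStabilizer v).map (MulAut.conj g).toMonoidHom := by
  rw [slStabilizer, slStabilizer, Subgroup.map_inf_eq _ _ _ (MulAut.conj g).injective,
    stabilizer_smul_eq_stabilizer_map_conj]
  exact congrArg _ (Subgroup.Normal.map_conj_eq _ g).symm

def transvectionGL {i j : n} (hij : i ≠ j) (c : F) : GL n F :=
  ⟨transvection i j c, transvection i j (-c),
    by simp [transvection_mul_transvection_same _ _ hij],
    by simp [transvection_mul_transvection_same _ _ hij]⟩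

lemma transvectionGL_mem_slStabilizer {i j : n} (hij : i ≠ j) (c : F) :
    transvectionGL hij c ∈ slStabilizer (Pi.single i 1) := by
  suffices (transvection i j c).col i = Pi.single i 1 by simpa [transvectionGL, hij]
  ext k
  simp [transvection, one_apply, Pi.single_apply, hij.symm, eq_comm]

lemma exists_smul_single_eq {b : n → n → F} (hb : LinearIndependent F b) :
    ∃ Q : GL n F, ∀ i, Q • Pi.single i 1 = b i := by
  have hQ : IsUnit (of b)ᵀ := linearIndependent_cols_iff_isUnit.mp hb
  exact ⟨hQ.unit, fun i => by simp [Units.smul_def]⟩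

lemma det_eq_one_of_pow_card_eq_one [Fintype F] {M : GL n F} (hM : M ^ Fintype.card F = 1) :
    (M : Matrix n n F).det = 1 := by
  rw [← FiniteField.pow_card (M : Matrix n n F).det, ← det_pow, ← Units.val_pow_eq_pow_val,
    hM, Units.val_one, det_one]

lemma exists_fixed_ne_zero_of_isPGroup [Fintype F] [Nonempty n] {p : ℕ} [Fact p.Prime]
    [CharP F p] {K : Subgroup (GL n F)} (hK : IsPGroup p K) :
    ∃ v : n → F, v ≠ 0 ∧ ∀ M ∈ K, M • v = v := by
  have hdvd : p ∣ Nat.card (n → F) := by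
    rw [Nat.card_fun, Nat.card_eq_fintype_card (α := F)]
    exact ((prime_dvd_char_iff_dvd_card p).mp (ringChar.eq F p).symm.dvd).trans
      (dvd_pow_self _ Nat.card_pos.ne')
  obtain ⟨v, hv, hv0⟩ := hK.exists_fixed_point_of_prime_dvd_card_of_fixed_point (n → F) hdvd
    (a := 0) (fun M => smul_zero _)
  exact ⟨v, hv0.symm, fun M hM => hv ⟨M, hM⟩⟩

lemma exists_le_slStabilizer_of_card_eq [Fintype F] [Nonempty n] {K : Subgroup (GL n F)}
    (hK : Nat.card K = Fintype.card F) : ∃ v : n → F, v ≠ 0 ∧ K ≤ slStabilizer v := by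
  obtain ⟨p, hchar⟩ := CharP.exists F
  obtain ⟨k, hp, hcard⟩ := FiniteField.card F p
  have : Fact p.Prime := ⟨hp⟩
  obtain ⟨v, hv, hfix⟩ := exists_fixed_ne_zero_of_isPGroup (IsPGroup.of_card (hK.trans hcard))
  refine ⟨v, hv, fun M hM => ⟨hfix M hM, ?_⟩⟩
  have hpow : (⟨M, hM⟩ : K) ^ Fintype.card F = 1 := hK ▸ pow_card_eq_one'
  simpa [Units.ext_iff] using det_eq_one_of_pow_card_eq_one (congrArg Subtype.val hpow)

lemma exists_linearIndependent_smul_of_irreducible [Nontrivial n] {G : Subgroup (GL n F)}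
    (hirr : ∀ W : Submodule F (n → F),
      (∀ g ∈ G, ∀ v ∈ W, (g : Matrix n n F) *ᵥ v ∈ W) → W = ⊥ ∨ W = ⊤)
    {v : n → F} (hv : v ≠ 0) : ∃ g ∈ G, LinearIndependent F ![v, g • v] := by
  by_contra! h
  have hinv : ∀ g ∈ G, ∀ x ∈ Submodule.span F {v},
      (g : Matrix n n F) *ᵥ x ∈ Submodule.span F {v} := by
    intro g hg x hx
    obtain ⟨t, rfl⟩ := Submodule.mem_span_singleton.mp hx
    obtain ⟨a, ha⟩ := not_forall_not.mp (mt (LinearIndependent.pair_iff' hv).mpr (h g hg))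
    rw [mulVec_smul, ← smul_eq_mulVec, ← Units.smul_def, ← ha, smul_smul]
    exact Submodule.smul_mem _ _ (Submodule.mem_span_singleton_self v)
  rcases hirr _ hinv with hbot | htop
  · exact hv (Submodule.span_singleton_eq_bot.mp hbot)
  · exact span_singleton_ne_top hv htop

end

section TwoByTwo

variable {F : Type*} [Field F]

lemma transvection_zero_one (x : F) : transvection (0 : Fin 2) 1 x = !![1, x; 0, 1] := by
  ext i j; fin_cases i <;> fin_cases j <;> simp [transvection, one_apply]

lemma transvection_one_zero (x : F) : transvection (1 : Fin 2) 0 x = !![1, 0; x, 1] := by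
  ext i j; fin_cases i <;> fin_cases j <;> simp [transvection, one_apply]

lemma eq_transvection_mul_transvection_mul_transvection {a b c d : F} (hdet : a * d - b * c = 1)
    (hc : c ≠ 0) :
    !![a, b; c, d] = transvection 0 1 ((a - 1) / c) * transvection 1 0 c *
      transvection 0 1 ((d - 1) / c) := by
  rw [transvection_zero_one, transvection_one_zero, transvection_zero_one]
  ext i j; fin_cases i <;> fin_cases j <;> simp <;> field_simp <;> grind

lemma ker_det_le_sup_slStabilizer_single :
    GeneralLinearGroup.det.ker ≤
      slStabilizer (Pi.single 0 1 : Fin 2 → F) ⊔ slStabilizer (Pi.single 1 1) := by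
  set H := slStabilizer (Pi.single 0 1 : Fin 2 → F) ⊔ slStabilizer (Pi.single 1 1)
  have hU (x : F) : transvectionGL zero_ne_one x ∈ H :=
    Subgroup.mem_sup_left (transvectionGL_mem_slStabilizer _ x)
  have hL (x : F) : transvectionGL one_ne_zero x ∈ H :=
    Subgroup.mem_sup_right (transvectionGL_mem_slStabilizer _ x)
  have hH {N : GL (Fin 2) F} (hN : (N : Matrix (Fin 2) (Fin 2) F).det = 1)
      (hc : (N : Matrix (Fin 2) (Fin 2) F) 1 0 ≠ 0) : N ∈ H := by
    rw [det_fin_two] at hN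
    have hfac : N = transvectionGL zero_ne_one _ * transvectionGL one_ne_zero _ *
        transvectionGL zero_ne_one _ :=
      Units.ext ((eta_fin_two _).trans (eq_transvection_mul_transvection_mul_transvection hN hc))
    rw [hfac]
    exact mul_mem (mul_mem (hU _) (hL _)) (hU _)
  intro N hN
  replace hN : (N : Matrix (Fin 2) (Fin 2) F).det = 1 := by simpa [Units.ext_iff] using hN
  by_cases hc : (N : Matrix (Fin 2) (Fin 2) F) 1 0 = 0
  · have hd : (N : Matrix (Fin 2) (Fin 2) F) 1 1 ≠ 0 := by
      intro hd
      simp [det_fin_two, hc, hd] at hN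
    have := hH (N := N * transvectionGL one_ne_zero 1) (by simp [transvectionGL, hN])
      (by simpa [transvectionGL, hc] using hd)
    simpa using mul_mem this (inv_mem (hL 1))
  · exact hH hN hc

lemma ker_det_le_sup_slStabilizer {v w : Fin 2 → F} (hvw : LinearIndependent F ![v, w]) :
    GeneralLinearGroup.det.ker ≤ slStabilizer v ⊔ slStabilizer w := by
  obtain ⟨Q, hQ⟩ := exists_smul_single_eq hvw
  have hv : Q • Pi.single 0 1 = v := hQ 0
  have hw : Q • Pi.single 1 1 = w := hQ 1
  rw [← hv, ← hw, slStabilizer_smul, slStabilizer_smul,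
    ← Subgroup.map_sup, ← Subgroup.Normal.map_conj_eq GeneralLinearGroup.det.ker Q]
  exact Subgroup.map_mono ker_det_le_sup_slStabilizer_single

lemma eq_transvection_of_mem_slStabilizer {M : GL (Fin 2) F}
    (hM : M ∈ slStabilizer (Pi.single 0 1)) :
    (M : Matrix (Fin 2) (Fin 2) F) = transvection 0 1 ((M : Matrix (Fin 2) (Fin 2) F) 0 1) := by
  obtain ⟨hfix, hdet⟩ := mem_slStabilizer.mp hM
  have h00 : (M : Matrix (Fin 2) (Fin 2) F) 0 0 = 1 := by simpa using congrFun hfix 0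
  have h10 : (M : Matrix (Fin 2) (Fin 2) F) 1 0 = 0 := by simpa using congrFun hfix 1
  have h11 : (M : Matrix (Fin 2) (Fin 2) F) 1 1 = 1 := by simpa [det_fin_two, h00, h10] using hdet
  rw [transvection_zero_one]
  ext i j; fin_cases i <;> fin_cases j <;> simp [h00, h10, h11]

lemma card_slStabilizer_le [Fintype F] {v : Fin 2 → F} (hv : v ≠ 0) :
    Nat.card (slStabilizer v) ≤ Fintype.card F := by
  obtain ⟨w, hvw⟩ := exists_linearIndependent_pair hv
  obtain ⟨Q, hQ⟩ := exists_smul_single_eq hvw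
  have hQv : Q • Pi.single 0 1 = v := hQ 0
  rw [← hQv, slStabilizer_smul,
    Subgroup.card_map_of_injective (MulAut.conj Q).injective, ← Nat.card_eq_fintype_card]
  refine Nat.card_le_card_of_injective
    (fun M => ((M : GL (Fin 2) F) : Matrix (Fin 2) (Fin 2) F) 0 1) fun M N h => ?_
  ext : 2
  rw [eq_transvection_of_mem_slStabilizer M.2, eq_transvection_of_mem_slStabilizer N.2]
  exact congrArg _ h

end TwoByTwo

theorem contains_SL2_of_irreducible_general (F : Type*) [Field F] [Fintype F]
    (G : Subgroup (GL (Fin 2) F))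
    (hsub : ∃ K : Subgroup (GL (Fin 2) F), K ≤ G ∧ Nat.card K = Fintype.card F)
    (hirr : ∀ W : Submodule F (Fin 2 → F),
      (∀ g ∈ G, ∀ v ∈ W, Matrix.mulVec (g : Matrix (Fin 2) (Fin 2) F) v ∈ W) →
      W = ⊥ ∨ W = ⊤) :
    ∀ M : GL (Fin 2) F, (M : Matrix (Fin 2) (Fin 2) F).det = 1 → M ∈ G := by
  obtain ⟨K, hKG, hK⟩ := hsub
  obtain ⟨v, hv, hKv⟩ := exists_le_slStabilizer_of_card_eq hK
  obtain ⟨g, hg, hvg⟩ := exists_linearIndependent_smul_of_irreducible hirr hv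
  have hvG : slStabilizer v ≤ G :=
    Subgroup.eq_of_le_of_card_ge hKv (hK ▸ card_slStabilizer_le hv) ▸ hKG
  have hgvG : slStabilizer (g • v) ≤ G := by
    rw [slStabilizer_smul]
    exact Subgroup.conj_smul_le_of_le hvG ⟨g, hg⟩
  intro M hM
  exact sup_le hvG hgvG (ker_det_le_sup_slStabilizer hvg (by simpa [Units.ext_iff] using hM))

/-- Let `F` be a finite field with at least `4` elements and `G ≤ GL₂(F)` a subgroup that
contains a subgroup of order `|F|` and acts irreducibly on `F²`.  Then `G` contains
`SL₂(F)`. -/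
theorem contains_SL2_of_irreducible (F : Type*) [Field F] [Fintype F]
    (hF : 4 ≤ Fintype.card F) (G : Subgroup (GL (Fin 2) F))
    (hsub : ∃ K : Subgroup (GL (Fin 2) F), K ≤ G ∧ Nat.card K = Fintype.card F)
    (hirr : ∀ W : Submodule F (Fin 2 → F),
      (∀ g ∈ G, ∀ v ∈ W, Matrix.mulVec (g : Matrix (Fin 2) (Fin 2) F) v ∈ W) →
      W = ⊥ ∨ W = ⊤) :
    ∀ M : GL (Fin 2) F, (M : Matrix (Fin 2) (Fin 2) F).det = 1 → M ∈ G :=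
  contains_SL2_of_irreducible_general F G hsub hirr
end

section
/- Let F = F_q be a finite field with q ≥ 4, let R = F_q[[π]] (or any complete DVR with residue field F_q), and let H be a closed subgroup of GL₂(R). If det(H) = R^×, the image of H in GL₂(F_q) under reduction mod π is all of GL₂(F_q), and the image of H ∩ (Id + π·M₂(R)) in (Id + π·M₂(R))/(Id + π²·M₂(R)) contains a non-scalar element, then H = GL₂(R). -/
/-
Let `K = H ∩ SL₂(R)`. Commutators of `H` lie in `K`, and `H` maps onto `GL₂(F)`, whose
commutator subgroup contains `SL₂(F)` when `q ≥ 4` (every elementary matrix is a commutator with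
a diagonal one); so `K` maps onto `SL₂(F)`.

Let `Vᵢ ⊆ M₂(F)` be the image of `K ∩ G^{i+1}` in `G^{[i+1]}`. The commutator of `h ≡ 1 + πA`
with a lift of `N ∈ GL₂(F)` is `≡ 1 + π(A - NAN⁻¹)`, and a conjugation-stable additive subgroup of
`M₂(F)` containing all `NAN⁻¹ - A` for one non-scalar `A` contains `sl₂(F)`; so `V₀ ⊇ sl₂(F)`.
The commutator of `1 + πA` and `1 + π^{i+1}B` is `≡ 1 + π^{i+2}[A, B]`; with `A` traceless or
`A = E₁₁` (in the image of `H ∩ G¹`, since `1 + π` is a determinant) these brackets span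
`sl₂(F)` even in characteristic `2`, so `Vᵢ ⊇ sl₂(F)` for all `i`. By successive approximation
`K` is then dense in `SL₂(R)`, and `det H = Rˣ` together with closedness gives `H = GL₂(R)`.
-/

open PowerSeries
open Matrix (GeneralLinearGroup)
open scoped commutatorElement

section CommRing

variable {R : Type*} [CommRing R]

theorem Matrix.exists_eq_add_smul_of_dvd {m n : Type*} {r : R} {A B : Matrix m n R}
    (h : ∀ i j, r ∣ A i j - B i j) : ∃ D : Matrix m n R, A = B + r • D := by
  choose D hD using h
  exact ⟨Matrix.of D, Matrix.ext fun i j => by simp; linear_combination hD i j⟩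

variable {n : Type*} [Fintype n] [DecidableEq n]

theorem Matrix.dvd_sub_apply_of_eq_one_add_smul_mul {r : R} {A B D : Matrix n n R}
    (h : A = (1 + r • D) * B) (i j : n) : r ∣ B i j - A i j :=
  ⟨-(D * B) i j, by simp [h, add_mul]⟩

theorem val_det_eq_one_of_mem_ker {g : GL n R} (hg : g ∈ GeneralLinearGroup.det.ker) :
    g.val.det = 1 :=
  congrArg Units.val hg

theorem commutatorElement_mem_inf_ker_det {H : Subgroup (GL n R)} {g h : GL n R} (hg : g ∈ H)
    (hh : h ∈ H) : ⁅g, h⁆ ∈ H ⊓ GeneralLinearGroup.det.ker := by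
  refine Subgroup.mem_inf.mpr ⟨?_, ?_⟩
  · rw [commutatorElement_def]
    exact H.mul_mem (H.mul_mem (H.mul_mem hg hh) (H.inv_mem hg)) (H.inv_mem hh)
  · rw [MonoidHom.mem_ker, map_commutatorElement, commutatorElement_eq_one_iff_mul_comm, mul_comm]

theorem commutator_le_map_inf_ker_det {S : Type*} [CommRing S] (f : R →+* S)
    {H : Subgroup (GL n R)} (hH : H.map (GeneralLinearGroup.map f) = ⊤) :
    commutator (GL n S) ≤ (H ⊓ GeneralLinearGroup.det.ker).map (GeneralLinearGroup.map f) := by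
  rw [commutator, ← hH, ← Subgroup.map_commutator]
  exact Subgroup.map_mono (Subgroup.commutator_le.mpr fun g hg h hh =>
    commutatorElement_mem_inf_ker_det hg hh)

theorem val_commutatorElement_of_eq_one_add {g : GL n R} {r : R} {A : Matrix n n R}
    (hg : g.val = 1 + r • A) (h : GL n R) :
    (⁅g, h⁆ : GL n R).val = 1 + r • ((A * h.val - h.val * A) * (h * g)⁻¹.val) := by
  have hcomm : (g * h).val = (h * g).val + r • (A * h.val - h.val * A) := by
    simp only [Units.val_mul, hg, add_mul, mul_add, one_mul, mul_one, smul_mul_assoc,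
      mul_smul_comm, smul_sub]
    abel
  rw [show ⁅g, h⁆ = g * h * (h * g)⁻¹ by group, Units.val_mul, hcomm, add_mul, Units.mul_inv,
    smul_mul_assoc]

end CommRing

namespace GL2

variable {F : Type*} [Field F]

def upper (t : F) : GL (Fin 2) F :=
  ⟨!![1, t; 0, 1], !![1, -t; 0, 1], by simp [Matrix.one_fin_two], by simp [Matrix.one_fin_two]⟩

def lower (t : F) : GL (Fin 2) F :=
  ⟨!![1, 0; t, 1], !![1, 0; -t, 1], by simp [Matrix.one_fin_two], by simp [Matrix.one_fin_two]⟩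

def diag {u v : F} (hu : u ≠ 0) (hv : v ≠ 0) : GL (Fin 2) F :=
  ⟨!![u, 0; 0, v], !![u⁻¹, 0; 0, v⁻¹], by simp [Matrix.one_fin_two, hu, hv],
    by simp [Matrix.one_fin_two, hu, hv]⟩

def weyl : GL (Fin 2) F :=
  ⟨!![0, 1; -1, 0], !![0, -1; 1, 0], by simp [Matrix.one_fin_two], by simp [Matrix.one_fin_two]⟩

theorem conj_upper (t a b c d : F) :
    (upper t).val * !![a, b; c, d] * (upper t)⁻¹.val =
      !![a + t * c, b + t * d - t * a - t ^ 2 * c; c, d - t * c] := by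
  simp [upper]; refine ⟨?_, ?_⟩ <;> ring

theorem conj_diag {u v : F} (hu : u ≠ 0) (hv : v ≠ 0) (a b c d : F) :
    (diag hu hv).val * !![a, b; c, d] * (diag hu hv)⁻¹.val =
      !![a, u / v * b; v / u * c, d] := by
  simp [diag]; field_simp; simp

theorem conj_weyl (a b c d : F) :
    (weyl : GL (Fin 2) F).val * !![a, b; c, d] * (weyl⁻¹ : GL (Fin 2) F).val =
      !![d, -c; -b, a] := by
  simp [weyl]

theorem conj_sub_upper (t a b c d : F) :
    (upper t).val * !![a, b; c, d] * (upper t)⁻¹.val - !![a, b; c, d] =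
      !![t * c, t * (d - a) - t ^ 2 * c; 0, -(t * c)] := by
  rw [conj_upper]; ext i j; fin_cases i <;> fin_cases j <;> simp; ring

theorem conj_sub_diag {u v : F} (hu : u ≠ 0) (hv : v ≠ 0) (a b c d : F) :
    (diag hu hv).val * !![a, b; c, d] * (diag hu hv)⁻¹.val - !![a, b; c, d] =
      !![0, (u / v - 1) * b; (v / u - 1) * c, 0] := by
  rw [conj_diag]; ext i j; fin_cases i <;> fin_cases j <;> simp <;> ring

section ConjugationStable

variable {l : F} {V : AddSubgroup (Matrix (Fin 2) (Fin 2) F)}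

theorem exists_ne_zero_upperRight_mem (hl0 : l ≠ 0) (hl1 : l ≠ 1)
    (hV : ∀ N : GL (Fin 2) F, ∀ B ∈ V, N.val * B * N⁻¹.val ∈ V) {A : Matrix (Fin 2) (Fin 2) F}
    (hA : ∀ c : F, A ≠ Matrix.scalar (Fin 2) c)
    (hAV : ∀ N : GL (Fin 2) F, N.val * A * N⁻¹.val - A ∈ V) :
    ∃ s ≠ 0, !![0, s; 0, 0] ∈ V := by
  obtain ⟨a, b, c, d, rfl⟩ : ∃ a b c d, A = !![a, b; c, d] := ⟨_, _, _, _, Matrix.eta_fin_two A⟩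
  have hl1' : l - 1 ≠ 0 := sub_ne_zero.mpr hl1
  have hdiag := hAV (diag hl0 one_ne_zero)
  rw [conj_sub_diag] at hdiag
  by_cases hc : c = 0
  · subst hc
    by_cases hb : b = 0
    · subst hb
      have had : d - a ≠ 0 := fun h => hA a (by
        rw [sub_eq_zero] at h; subst h; ext i j; fin_cases i <;> fin_cases j <;> rfl)
      have hup := hAV (upper 1)
      rw [conj_sub_upper] at hup
      exact ⟨_, had, by simpa using hup⟩
    · exact ⟨_, mul_ne_zero hl1' hb, by simpa using hdiag⟩
  · have hup := sub_mem (hV (upper 1) _ hdiag) hdiag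
    rw [conj_sub_upper] at hup
    have hdiag' := sub_mem (hV (diag hl0 one_ne_zero) _ hup) hup
    rw [conj_sub_diag] at hdiag'
    simp only [div_one, one_div, one_mul, sub_self, one_pow, mul_zero, zero_sub] at hdiag'
    exact ⟨_, mul_ne_zero hl1' (neg_ne_zero.mpr (mul_ne_zero
      (sub_ne_zero.mpr (inv_ne_one.mpr hl1)) hc)), hdiag'⟩

theorem mem_of_trace_eq_zero (hl0 : l ≠ 0) (hl1 : l ≠ 1)
    (hV : ∀ N : GL (Fin 2) F, ∀ B ∈ V, N.val * B * N⁻¹.val ∈ V) {A : Matrix (Fin 2) (Fin 2) F}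
    (hA : ∀ c : F, A ≠ Matrix.scalar (Fin 2) c)
    (hAV : ∀ N : GL (Fin 2) F, N.val * A * N⁻¹.val - A ∈ V)
    {B : Matrix (Fin 2) (Fin 2) F} (hB : B.trace = 0) : B ∈ V := by
  obtain ⟨s, hs, hsV⟩ := exists_ne_zero_upperRight_mem hl0 hl1 hV hA hAV
  have upper_mem (x : F) : !![0, x; 0, 0] ∈ V := by
    by_cases hx : x = 0
    · convert V.zero_mem
      ext i j; fin_cases i <;> fin_cases j <;> simp [hx]
    · have := hV (diag (div_ne_zero hx hs) one_ne_zero) _ hsV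
      rw [conj_diag] at this
      simpa [hs] using this
  have lower_mem (z : F) : !![0, 0; z, 0] ∈ V := by
    have := hV weyl _ (upper_mem (-z))
    rw [conj_weyl] at this
    simpa using this
  have diag_mem (x : F) : !![x, 0; 0, -x] ∈ V := by
    have := sub_mem (sub_mem (hV (upper 1) _ (lower_mem x)) (lower_mem x)) (upper_mem (-x))
    rw [conj_upper] at this
    convert this using 1
    ext i j; fin_cases i <;> fin_cases j <;> simp
  obtain ⟨a, b, c, d, rfl⟩ : ∃ a b c d, B = !![a, b; c, d] := ⟨_, _, _, _, Matrix.eta_fin_two B⟩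
  obtain rfl : d = -a := by simp [Matrix.trace_fin_two] at hB; linear_combination hB
  convert add_mem (add_mem (diag_mem a) (upper_mem b)) (lower_mem c) using 1
  ext i j; fin_cases i <;> fin_cases j <;> simp

end ConjugationStable

theorem commutator_diag_upper {u : F} (hu : u ≠ 0) (s : F) :
    (⁅diag hu (inv_ne_zero hu), upper s⁆ : GL (Fin 2) F) = upper ((u ^ 2 - 1) * s) := by
  rw [commutatorElement_def]
  ext i j
  fin_cases i <;> fin_cases j <;> simp [diag, upper, hu]
  ring

theorem commutator_diag_lower {u : F} (hu : u ≠ 0) (s : F) :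
    (⁅diag (inv_ne_zero hu) hu, lower s⁆ : GL (Fin 2) F) = lower ((u ^ 2 - 1) * s) := by
  rw [commutatorElement_def]
  ext i j
  fin_cases i <;> fin_cases j <;> simp [diag, lower, hu]
  ring

theorem upper_mem_commutator {u : F} (hu : u ≠ 0) (hu2 : u ^ 2 ≠ 1) (t : F) :
    upper t ∈ commutator (GL (Fin 2) F) := by
  rw [← mul_div_cancel₀ t (sub_ne_zero.mpr hu2), ← commutator_diag_upper hu]
  exact Subgroup.commutator_mem_commutator (Subgroup.mem_top _) (Subgroup.mem_top _)

theorem lower_mem_commutator {u : F} (hu : u ≠ 0) (hu2 : u ^ 2 ≠ 1) (t : F) :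
    lower t ∈ commutator (GL (Fin 2) F) := by
  rw [← mul_div_cancel₀ t (sub_ne_zero.mpr hu2), ← commutator_diag_lower hu]
  exact Subgroup.commutator_mem_commutator (Subgroup.mem_top _) (Subgroup.mem_top _)

theorem eq_upper_mul_lower_mul_upper {N : GL (Fin 2) F} (hN : N.val.det = 1) (hc : N 1 0 ≠ 0) :
    N = upper ((N 0 0 - 1) / N 1 0) * lower (N 1 0) * upper ((N 1 1 - 1) / N 1 0) := by
  rw [Matrix.det_fin_two] at hN
  ext i j
  fin_cases i <;> fin_cases j <;> simp [upper, lower, Matrix.mul_apply, Fin.sum_univ_two] <;>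
    field_simp <;> first | linear_combination -hN | ring

theorem ker_det_le_commutator {u : F} (hu : u ≠ 0) (hu2 : u ^ 2 ≠ 1) :
    (GeneralLinearGroup.det : GL (Fin 2) F →* Fˣ).ker ≤ commutator (GL (Fin 2) F) := by
  have big_cell (N : GL (Fin 2) F) (hN : N.val.det = 1) (hc : N 1 0 ≠ 0) :
      N ∈ commutator (GL (Fin 2) F) :=
    eq_upper_mul_lower_mul_upper hN hc ▸ mul_mem (mul_mem (upper_mem_commutator hu hu2 _)
      (lower_mem_commutator hu hu2 _)) (upper_mem_commutator hu hu2 _)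
  intro N hN
  have hN : N.val.det = 1 := val_det_eq_one_of_mem_ker hN
  by_cases hc : N 1 0 = 0
  · have hN' : (lower 1 * N).val.det = 1 := by
      rw [Units.val_mul, Matrix.det_mul, hN]; simp [lower]
    have ha : (lower 1 * N : GL (Fin 2) F) 1 0 ≠ 0 := by
      rw [Matrix.det_fin_two, hc] at hN
      simp [lower, Matrix.mul_apply, Fin.sum_univ_two, hc]
      exact left_ne_zero_of_mul_eq_one (by simpa using hN)
    simpa using mul_mem (inv_mem (lower_mem_commutator hu hu2 1)) (big_cell _ hN' ha)
  · exact big_cell N hN hc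

end GL2

namespace PowerSeries

variable {F : Type*} [CommRing F] {n : Type*}

local notation "red" => GeneralLinearGroup.map (constantCoeff (R := F))

theorem map_constantCoeff_X_pow_smul {k : ℕ} (hk : k ≠ 0) (D : Matrix n n F⟦X⟧) :
    ((X : F⟦X⟧) ^ k • D).map constantCoeff = 0 := by
  ext i j; simp [hk]

theorem exists_eq_add_X_smul_of_map_eq {A B : Matrix n n F⟦X⟧}
    (h : A.map constantCoeff = B.map constantCoeff) : ∃ D, A = B + (X : F⟦X⟧) • D :=
  Matrix.exists_eq_add_smul_of_dvd fun i j => X_dvd_iff.mpr <| by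
    simpa [sub_eq_zero] using congrFun (congrFun h i) j

variable [DecidableEq n]

theorem map_constantCoeff_one_add_X_pow_smul {k : ℕ} (hk : k ≠ 0) (D : Matrix n n F⟦X⟧) :
    (1 + (X : F⟦X⟧) ^ k • D).map constantCoeff = 1 := by
  simp [Matrix.map_add, map_constantCoeff_X_pow_smul hk, Matrix.map_one _ (map_zero _) (map_one _)]

variable [Fintype n]

theorem map_eq_one_of_val_eq_one_add {g : GL n F⟦X⟧} {k : ℕ} (hk : k ≠ 0) {D : Matrix n n F⟦X⟧}
    (hg : g.val = 1 + (X : F⟦X⟧) ^ k • D) : red g = 1 :=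
  Units.ext <| (congrArg (Matrix.map · constantCoeff) hg).trans
    (map_constantCoeff_one_add_X_pow_smul hk D)

theorem trace_map_constantCoeff_of_det_eq {k : ℕ} (hk : k ≠ 0) {D : Matrix n n F⟦X⟧}
    {c : F⟦X⟧} (hD : (1 + (X : F⟦X⟧) ^ k • D).det = 1 + (X : F⟦X⟧) ^ k * c) :
    (D.map constantCoeff).trace = constantCoeff c := by
  rw [Matrix.det_one_add_smul] at hD
  set e := (Matrix.det (1 + (Polynomial.X : Polynomial F⟦X⟧) • D.map Polynomial.C)).divX.divX.eval
    (X ^ k)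
  have : X ^ k * (D.trace + e * X ^ k) = X ^ k * c := by linear_combination hD
  rw [← AddMonoidHom.map_trace, ← X_pow_mul_cancel this]
  simp [hk]

theorem map_mem_ker_det_of_det_eq {g : GL n F⟦X⟧} {c : F⟦X⟧} (hg : g.val.det = 1 + X * c) :
    red g ∈ GeneralLinearGroup.det.ker := by
  rw [MonoidHom.mem_ker, GeneralLinearGroup.map_det]
  ext
  simp [hg]

theorem exists_mem_val_eq_one_add_X_smul_mul {K : Subgroup (GL n F⟦X⟧)}
    (hlift : GeneralLinearGroup.det.ker ≤ K.map red) {g : GL n F⟦X⟧}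
    (hg : red g ∈ GeneralLinearGroup.det.ker) :
    ∃ k ∈ K, ∃ D, g.val = (1 + (X : F⟦X⟧) • D) * k.val := by
  obtain ⟨k, hk, hkg⟩ := hlift hg
  obtain ⟨D, hD⟩ := exists_eq_add_X_smul_of_map_eq (A := (g * k⁻¹).val) (B := 1) <| by
    change (red (g * k⁻¹)).val = (red 1).val
    rw [map_mul, map_inv, hkg, mul_inv_cancel, map_one]
  exact ⟨k, hk, D, by rw [← hD, Units.val_mul, mul_assoc, Units.inv_mul, mul_one]⟩

/-- `gradedPiece K i` is the image of `K ∩ G^{i+1}` in `G^{[i+1]} ≅ Mₙ(F)`, under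
`1 + X^{i+1} D ↦ D mod X`; note the shift: the index `i` stands for the level `i + 1`. -/
def gradedPiece (K : Subgroup (GL n F⟦X⟧)) (i : ℕ) : AddSubgroup (Matrix n n F) where
  carrier := {B | ∃ g ∈ K, ∃ D, g.val = 1 + (X : F⟦X⟧) ^ (i + 1) • D ∧ D.map constantCoeff = B}
  zero_mem' := ⟨1, K.one_mem, 0, by simp, Matrix.map_zero _ (map_zero _)⟩
  add_mem' := by
    rintro _ _ ⟨g, hg, D, hgD, rfl⟩ ⟨g', hg', D', hgD', rfl⟩
    refine ⟨g * g', K.mul_mem hg hg', D + D' + (X : F⟦X⟧) ^ (i + 1) • (D * D'), ?_, ?_⟩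
    · simp only [Units.val_mul, hgD, hgD', add_mul, mul_add, one_mul, mul_one, smul_add,
        smul_mul_assoc, mul_smul_comm, smul_smul]
      abel
    · simp [Matrix.map_add, map_constantCoeff_X_pow_smul]
  neg_mem' := by
    rintro _ ⟨g, hg, D, hgD, rfl⟩
    have hinv : g⁻¹.val = 1 + (X : F⟦X⟧) ^ (i + 1) • -(g⁻¹.val * D) := by
      have := congrArg (g⁻¹.val * ·) hgD
      simp only [Units.inv_mul, mul_add, mul_one, mul_smul_comm] at this
      rw [smul_neg, ← sub_eq_add_neg, eq_sub_iff_add_eq, ← this]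
    refine ⟨g⁻¹, K.inv_mem hg, _, hinv, ?_⟩
    have h1 : g⁻¹.val.map constantCoeff = 1 := by
      rw [hinv]; exact map_constantCoeff_one_add_X_pow_smul i.succ_ne_zero _
    rw [Matrix.map_neg _ (map_neg _), Matrix.map_mul, h1, one_mul]

theorem gradedPiece_mono {K K' : Subgroup (GL n F⟦X⟧)} (h : K ≤ K') (i : ℕ) :
    gradedPiece K i ≤ gradedPiece K' i :=
  fun _ ⟨g, hg, hgD⟩ => ⟨g, h hg, hgD⟩

theorem conj_mem_gradedPiece {K : Subgroup (GL n F⟦X⟧)} {a : GL n F⟦X⟧}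
    (ha : ∀ g ∈ K, a * g * a⁻¹ ∈ K) {i : ℕ} {B : Matrix n n F} (hB : B ∈ gradedPiece K i) :
    (red a).val * B * (red a)⁻¹.val ∈ gradedPiece K i := by
  obtain ⟨g, hg, D, hgD, rfl⟩ := hB
  refine ⟨a * g * a⁻¹, ha g hg, a.val * D * a⁻¹.val, ?_, ?_⟩
  · rw [Units.val_mul, Units.val_mul, hgD, mul_add, add_mul, mul_one, Units.mul_inv,
      mul_smul_comm, smul_mul_assoc]
  · rw [Matrix.map_mul, Matrix.map_mul]; rfl

theorem sub_conj_mem_gradedPiece_zero {H : Subgroup (GL n F⟦X⟧)} {A : Matrix n n F}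
    (hA : A ∈ gradedPiece H 0) {a : GL n F⟦X⟧} (ha : a ∈ H) :
    A - (red a).val * A * (red a)⁻¹.val ∈ gradedPiece (H ⊓ GeneralLinearGroup.det.ker) 0 := by
  obtain ⟨h, hh, D, hhD, rfl⟩ := hA
  refine ⟨⁅h, a⁆, commutatorElement_mem_inf_ker_det hh ha, _,
    val_commutatorElement_of_eq_one_add hhD a, ?_⟩
  have hred : (red (a * h)⁻¹).val = (red a)⁻¹.val := by
    rw [map_inv, map_mul, map_eq_one_of_val_eq_one_add one_ne_zero hhD, mul_one]
  change constantCoeff.mapMatrix ((D * a.val - a.val * D) * (a * h)⁻¹.val) = _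
  rw [map_mul, map_sub, map_mul, map_mul]
  change (D.map constantCoeff * (red a).val - (red a).val * D.map constantCoeff) *
    (red (a * h)⁻¹).val = _
  rw [hred, sub_mul, mul_assoc, Units.mul_inv, mul_one]

theorem mul_sub_mul_mem_gradedPiece_succ {H : Subgroup (GL n F⟦X⟧)} {A B : Matrix n n F}
    (hA : A ∈ gradedPiece H 0) {i : ℕ}
    (hB : B ∈ gradedPiece (H ⊓ GeneralLinearGroup.det.ker) i) :
    A * B - B * A ∈ gradedPiece (H ⊓ GeneralLinearGroup.det.ker) (i + 1) := by
  obtain ⟨h, hh, D, hhD, rfl⟩ := hA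
  obtain ⟨g, hg, E, hgE, rfl⟩ := hB
  refine ⟨⁅h, g⁆, commutatorElement_mem_inf_ker_det hh (Subgroup.mem_inf.mp hg).1,
    (D * E - E * D) * (g * h)⁻¹.val, ?_, ?_⟩
  · rw [val_commutatorElement_of_eq_one_add hhD g, hgE]
    simp only [mul_add, add_mul, mul_one, one_mul, mul_smul_comm, smul_mul_assoc,
      add_sub_add_left_eq_sub, ← smul_sub, smul_smul, ← pow_add]
    ring_nf
  · have hred : (red (g * h)⁻¹).val = 1 := by
      rw [map_inv, map_mul, map_eq_one_of_val_eq_one_add one_ne_zero hhD,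
        map_eq_one_of_val_eq_one_add i.succ_ne_zero hgE, mul_one, inv_one, Units.val_one]
    change constantCoeff.mapMatrix ((D * E - E * D) * (g * h)⁻¹.val) = _
    rw [map_mul, map_sub, map_mul, map_mul]
    change _ * (red (g * h)⁻¹).val = _
    rw [hred, mul_one]; rfl

theorem exists_mem_gradedPiece_zero_trace_eq {H : Subgroup (GL n F⟦X⟧)}
    (hlift : GeneralLinearGroup.det.ker ≤ (H ⊓ GeneralLinearGroup.det.ker).map red)
    {g : GL n F⟦X⟧} (hg : g ∈ H) {c : F⟦X⟧} (hdet : g.val.det = 1 + X * c) :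
    ∃ B ∈ gradedPiece H 0, B.trace = constantCoeff c := by
  obtain ⟨k, hk, D, hD⟩ :=
    exists_mem_val_eq_one_add_X_smul_mul hlift (map_mem_ker_det_of_det_eq hdet)
  have hgk : (g * k⁻¹).val = 1 + (X : F⟦X⟧) ^ (0 + 1) • D := by
    rw [Units.val_mul, hD, mul_assoc, Units.mul_inv, mul_one, zero_add, pow_one]
  refine ⟨_, ⟨g * k⁻¹, H.mul_mem hg (H.inv_mem hk.1), D, hgk, rfl⟩,
    trace_map_constantCoeff_of_det_eq one_ne_zero ?_⟩
  have h := congrArg Matrix.det hgk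
  rw [Units.val_mul, Matrix.det_mul, hdet, val_det_eq_one_of_mem_ker (inv_mem hk.2), mul_one] at h
  simpa using h.symm

theorem exists_mem_val_eq_one_add_X_pow_smul_mul {K : Subgroup (GL n F⟦X⟧)}
    (hK : K ≤ GeneralLinearGroup.det.ker) (hlift : GeneralLinearGroup.det.ker ≤ K.map red)
    (hsl : ∀ i (B : Matrix n n F), B.trace = 0 → B ∈ gradedPiece K i)
    {g : GL n F⟦X⟧} (hg : g ∈ GeneralLinearGroup.det.ker) (i : ℕ) :
    ∃ k ∈ K, ∃ D, g.val = (1 + (X : F⟦X⟧) ^ (i + 1) • D) * k.val := by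
  induction i with
  | zero =>
    simpa using exists_mem_val_eq_one_add_X_smul_mul hlift
      (map_mem_ker_det_of_det_eq (c := 0) (by simpa using val_det_eq_one_of_mem_ker hg))
  | succ i ih =>
    obtain ⟨k, hk, D, hD⟩ := ih
    have hdet : (1 + (X : F⟦X⟧) ^ (i + 1) • D).det = 1 + (X : F⟦X⟧) ^ (i + 1) * 0 := by
      rw [mul_zero, add_zero]
      have := congrArg Matrix.det hD
      rwa [Matrix.det_mul, val_det_eq_one_of_mem_ker hg, val_det_eq_one_of_mem_ker (hK hk),
        mul_one, eq_comm] at this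
    obtain ⟨k', hk', E, hk'E, hED⟩ := hsl i _
      ((trace_map_constantCoeff_of_det_eq i.succ_ne_zero hdet).trans (map_zero _))
    obtain ⟨D', rfl⟩ := exists_eq_add_X_smul_of_map_eq hED.symm
    refine ⟨k' * k, K.mul_mem hk' hk, D' * k'⁻¹.val, ?_⟩
    rw [hD, Units.val_mul, ← mul_assoc]
    congr 1
    rw [add_mul, one_mul, smul_mul_assoc, mul_assoc, Units.inv_mul, mul_one, hk'E, smul_add,
      smul_smul, ← pow_succ, ← add_assoc]

theorem map_constantCoeff_ne_scalar {g : GL n F⟦X⟧} {D : Matrix n n F⟦X⟧}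
    (hgD : g.val = 1 + (X : F⟦X⟧) • D)
    (hns : ¬∃ c : F⟦X⟧, ∀ i j,
      (X : F⟦X⟧) ^ 2 ∣ g i j - (1 + Matrix.scalar n (X * c) : Matrix n n F⟦X⟧) i j)
    (c : F) : D.map constantCoeff ≠ Matrix.scalar n c := by
  intro hc
  obtain ⟨E, rfl⟩ := exists_eq_add_X_smul_of_map_eq (A := D) (B := Matrix.scalar n (C c)) <| by
    rw [hc]; ext i j; by_cases h : i = j <;> simp [h]
  refine hns ⟨C c, fun i j => ⟨E i j, ?_⟩⟩
  by_cases h : i = j <;> simp [hgD, h] <;> ring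

end PowerSeries

section SL2

variable {F : Type*} [Field F] {H : Subgroup (GL (Fin 2) F⟦X⟧)}

local notation "red" => GeneralLinearGroup.map (constantCoeff (R := F))

theorem mem_gradedPiece_zero_of_trace_eq_zero {l : F} (hl0 : l ≠ 0) (hl1 : l ≠ 1)
    (hH : H.map red = ⊤) {A : Matrix (Fin 2) (Fin 2) F} (hA : A ∈ gradedPiece H 0)
    (hAns : ∀ c : F, A ≠ Matrix.scalar (Fin 2) c) {B : Matrix (Fin 2) (Fin 2) F}
    (hB : B.trace = 0) : B ∈ gradedPiece (H ⊓ GeneralLinearGroup.det.ker) 0 := by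
  have lift (N : GL (Fin 2) F) : ∃ a ∈ H, red a = N :=
    Subgroup.mem_map.mp (hH ▸ Subgroup.mem_top N)
  refine GL2.mem_of_trace_eq_zero hl0 hl1 (fun N B hB => ?_) hAns (fun N => ?_) hB
  · obtain ⟨a, ha, rfl⟩ := lift N
    exact conj_mem_gradedPiece (fun g hg => Subgroup.mem_inf.mpr ⟨H.mul_mem (H.mul_mem ha hg.1)
      (H.inv_mem ha), (MonoidHom.normal_ker _).conj_mem g hg.2 a⟩) hB
  · obtain ⟨a, ha, rfl⟩ := lift N
    simpa using neg_mem (sub_conj_mem_gradedPiece_zero hA ha)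

theorem mem_gradedPiece_succ_of_trace_eq_zero (hE : !![1, 0; 0, 0] ∈ gradedPiece H 0)
    (h0 : ∀ B : Matrix (Fin 2) (Fin 2) F, B.trace = 0 → B ∈ gradedPiece H 0) {i : ℕ}
    (hi : ∀ B : Matrix (Fin 2) (Fin 2) F, B.trace = 0 →
      B ∈ gradedPiece (H ⊓ GeneralLinearGroup.det.ker) i)
    {B : Matrix (Fin 2) (Fin 2) F} (hB : B.trace = 0) :
    B ∈ gradedPiece (H ⊓ GeneralLinearGroup.det.ker) (i + 1) := by
  obtain ⟨x, y, z, w, rfl⟩ : ∃ x y z w, B = !![x, y; z, w] := ⟨_, _, _, _, Matrix.eta_fin_two B⟩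
  obtain rfl : w = -x := by simp [Matrix.trace_fin_two] at hB; linear_combination hB
  have := add_mem (add_mem
    (mul_sub_mul_mem_gradedPiece_succ (h0 !![0, x; 0, 0] (by simp)) (hi !![0, 0; 1, 0] (by simp)))
    (mul_sub_mul_mem_gradedPiece_succ hE (hi !![0, y; 0, 0] (by simp))))
    (mul_sub_mul_mem_gradedPiece_succ hE (hi !![0, 0; -z, 0] (by simp)))
  convert this using 1
  ext i j; fin_cases i <;> fin_cases j <;> simp

theorem mem_gradedPiece_of_trace_eq_zero {l : F} (hl0 : l ≠ 0) (hl1 : l ≠ 1)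
    (hH : H.map red = ⊤)
    (hlift : GeneralLinearGroup.det.ker ≤ (H ⊓ GeneralLinearGroup.det.ker).map red)
    {g : GL (Fin 2) F⟦X⟧} (hg : g ∈ H) (hgdet : g.val.det = 1 + X)
    {A : Matrix (Fin 2) (Fin 2) F} (hA : A ∈ gradedPiece H 0)
    (hAns : ∀ c : F, A ≠ Matrix.scalar (Fin 2) c) (i : ℕ) {B : Matrix (Fin 2) (Fin 2) F}
    (hB : B.trace = 0) : B ∈ gradedPiece (H ⊓ GeneralLinearGroup.det.ker) i := by
  have h0 (B : Matrix (Fin 2) (Fin 2) F) (hB : B.trace = 0) : B ∈ gradedPiece H 0 :=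
    gradedPiece_mono inf_le_left 0 (mem_gradedPiece_zero_of_trace_eq_zero hl0 hl1 hH hA hAns hB)
  obtain ⟨B₁, hB₁, htr⟩ :=
    exists_mem_gradedPiece_zero_trace_eq hlift hg (c := 1) (by rw [hgdet, mul_one])
  have hE : !![1, 0; 0, 0] ∈ gradedPiece H 0 := by
    have := add_mem (h0 (!![1, 0; 0, 0] - B₁) (by simp [htr])) hB₁
    rwa [sub_add_cancel] at this
  induction i generalizing B with
  | zero => exact mem_gradedPiece_zero_of_trace_eq_zero hl0 hl1 hH hA hAns hB
  | succ i ih => exact mem_gradedPiece_succ_of_trace_eq_zero hE h0 (fun B hB => ih hB) hB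

end SL2

theorem exists_ne_zero_sq_ne_one {F : Type*} [Field F] [Fintype F] (hq : 4 ≤ Fintype.card F) :
    ∃ u : F, u ≠ 0 ∧ u ^ 2 ≠ 1 := by
  classical
  obtain ⟨u, -, hu⟩ := Finset.exists_mem_notMem_of_card_lt_card (s := ({0, 1, -1} : Finset F))
    (t := Finset.univ) (Finset.card_le_three.trans_lt (by rw [Finset.card_univ]; omega))
  simp only [Finset.mem_insert, Finset.mem_singleton, not_or] at hu
  exact ⟨u, hu.1, by rw [Ne, sq_eq_one_iff]; tauto⟩

/-- Pink–Rütsche surjectivity criterion for `GL₂` over the complete discrete valuation ring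
`R = F_q[[π]]` (with `π = X`), `q ≥ 4`.  `H` is a closed subgroup of `GL₂(R)` (closedness in
the `π`-adic topology is expressed concretely: any matrix approximable modulo every power
`π^n` by elements of `H` belongs to `H`).  If `det H = Rˣ`, the reduction of `H` modulo `π`
is all of `GL₂(F_q)`, and the image of `H ∩ (1 + π M₂(R))` in
`(1 + π M₂(R))/(1 + π² M₂(R))` contains a non-scalar element, then `H = GL₂(R)`. -/
theorem closed_subgroup_eq_top (F : Type*) [Field F] [Fintype F]
    (hq : 4 ≤ Fintype.card F)
    (H : Subgroup (GL (Fin 2) (PowerSeries F)))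
    (hclosed : ∀ M : GL (Fin 2) (PowerSeries F),
      (∀ n : ℕ, ∃ h ∈ H, ∀ i j : Fin 2, (X : PowerSeries F) ^ n ∣
        ((h : Matrix (Fin 2) (Fin 2) (PowerSeries F)) i j
          - (M : Matrix (Fin 2) (Fin 2) (PowerSeries F)) i j)) → M ∈ H)
    (hdet : ∀ u : (PowerSeries F)ˣ, ∃ h ∈ H,
      (h : Matrix (Fin 2) (Fin 2) (PowerSeries F)).det = (u : PowerSeries F))
    (hred : ∀ N : GL (Fin 2) F, ∃ h ∈ H,
      (h : Matrix (Fin 2) (Fin 2) (PowerSeries F)).map (constantCoeff (R := F))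
        = (N : Matrix (Fin 2) (Fin 2) F))
    (hns : ∃ h ∈ H,
      (∀ i j : Fin 2, (X : PowerSeries F) ∣
        ((h : Matrix (Fin 2) (Fin 2) (PowerSeries F)) i j
          - (1 : Matrix (Fin 2) (Fin 2) (PowerSeries F)) i j)) ∧
      ¬ ∃ c : PowerSeries F, ∀ i j : Fin 2, (X : PowerSeries F) ^ 2 ∣
        ((h : Matrix (Fin 2) (Fin 2) (PowerSeries F)) i j
          - (((1 : Matrix (Fin 2) (Fin 2) (PowerSeries F))
              + Matrix.scalar (Fin 2) (X * c) : Matrix (Fin 2) (Fin 2) (PowerSeries F))) i j)) :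
    H = ⊤ := by
  obtain ⟨u, hu0, hu2⟩ := exists_ne_zero_sq_ne_one hq
  have hH : H.map (GeneralLinearGroup.map constantCoeff) = ⊤ := eq_top_iff.mpr fun N _ =>
    let ⟨h, hh, hN⟩ := hred N; ⟨h, hh, Units.ext hN⟩
  have hlift := (GL2.ker_det_le_commutator hu0 hu2).trans (commutator_le_map_inf_ker_det _ hH)
  have hX1 : IsUnit (1 + X : F⟦X⟧) := isUnit_iff_constantCoeff.mpr (by simp)
  obtain ⟨g, hg, hgdet⟩ := hdet hX1.unit
  obtain ⟨h, hh, hX, hnsc⟩ := hns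
  obtain ⟨D, hD⟩ := Matrix.exists_eq_add_smul_of_dvd hX
  have hsl : ∀ i (B : Matrix (Fin 2) (Fin 2) F), B.trace = 0 →
      B ∈ gradedPiece (H ⊓ GeneralLinearGroup.det.ker) i :=
    fun i B hB => mem_gradedPiece_of_trace_eq_zero hu0 (fun h1 => hu2 (by rw [h1, one_pow])) hH
      hlift hg (hgdet.trans hX1.unit_spec) ⟨h, hh, D, by rwa [zero_add, pow_one], rfl⟩
      (map_constantCoeff_ne_scalar hD hnsc) i hB
  rw [Subgroup.eq_top_iff']
  intro M
  obtain ⟨h', hh', hdetM⟩ := hdet (GeneralLinearGroup.det M)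
  have hM : M * h'⁻¹ ∈ GeneralLinearGroup.det.ker := by
    rw [MonoidHom.mem_ker, map_mul, map_inv, mul_inv_eq_one]; exact Units.ext hdetM.symm
  refine hclosed M fun m => ?_
  obtain ⟨k, hk, E, hkE⟩ := exists_mem_val_eq_one_add_X_pow_smul_mul inf_le_right hlift hsl hM m
  have hMk : M.val = (1 + (X : F⟦X⟧) ^ (m + 1) • E) * (k * h').val := by
    rw [Units.val_mul, ← mul_assoc, ← hkE, ← Units.val_mul, inv_mul_cancel_right]
  exact ⟨k * h', H.mul_mem hk.1 hh', fun i j =>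
    (pow_dvd_pow X m.le_succ).trans (Matrix.dvd_sub_apply_of_eq_one_add_smul_mul hMk i j)⟩
end

section
/- Let F be a finite field with |F| ≥ 4 and let N ≤ GL₂(F) be a normal subgroup of GL₂(F) containing a nontrivial unipotent upper-triangular matrix. Then N contains SL₂(F). -/
/-!
Conjugating by `diag(c / t, 1)` carries the transvection `!![1, t; 0, 1]` to `!![1, c; 0, 1]`,
and conjugating by the coordinate swap carries `!![1, c; 0, 1]` to `!![1, 0; c, 1]`; a normal
subgroup of `GL₂(F)` containing one nontrivial upper transvection therefore contains every
elementary transvection, and these generate `SL₂(F)`.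
-/

open Matrix Matrix.SpecialLinearGroup
open scoped MatrixGroups

theorem Subgroup.Normal.mem_of_isConj {G : Type*} [Group G] {N : Subgroup G} (hN : N.Normal)
    {a b : G} (hab : IsConj a b) (ha : a ∈ N) : b ∈ N := by
  obtain ⟨c, rfl⟩ := isConj_iff.1 hab
  exact hN.conj_mem a ha c

section

variable {F : Type*} [Field F]

lemma transvection_zero_one_coe (c : F) :
    ((transvection zero_ne_one c : SL(2, F)) : Matrix (Fin 2) (Fin 2) F) = !![1, c; 0, 1] := by
  ext i j; fin_cases i <;> fin_cases j <;> simp [transvection_coe]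

lemma transvection_one_zero_coe (c : F) :
    ((transvection one_ne_zero c : SL(2, F)) : Matrix (Fin 2) (Fin 2) F) = !![1, 0; c, 1] := by
  ext i j; fin_cases i <;> fin_cases j <;> simp [transvection_coe]

lemma isConj_toGL_transvection_zero_one {t c : F} (ht : t ≠ 0) (hc : c ≠ 0) :
    IsConj (toGL (transvection zero_ne_one t : SL(2, F)))
      (toGL (transvection zero_ne_one c : SL(2, F))) := by
  refine isConj_iff.2 ⟨GeneralLinearGroup.mkOfDetNeZero !![c / t, 0; 0, 1] (by simp [hc, ht]), ?_⟩
  rw [mul_inv_eq_iff_eq_mul]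
  ext : 1
  simp [transvection_zero_one_coe, ht]

lemma isConj_toGL_transvection_zero_one_one_zero (c : F) :
    IsConj (toGL (transvection zero_ne_one c : SL(2, F)))
      (toGL (transvection one_ne_zero c : SL(2, F))) := by
  refine isConj_iff.2 ⟨GeneralLinearGroup.mkOfDetNeZero !![(0 : F), 1; 1, 0] (by simp), ?_⟩
  rw [mul_inv_eq_iff_eq_mul]
  ext : 1
  simp [transvection_zero_one_coe, transvection_one_zero_coe]

theorem toGL_mem_of_transvection_mem {N : Subgroup (GL (Fin 2) F)} (hN : N.Normal)
    {t : F} (ht : t ≠ 0) (htN : toGL (transvection zero_ne_one t) ∈ N) (A : SL(2, F)) :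
    toGL A ∈ N := by
  have hupper (c : F) : toGL (transvection zero_ne_one c) ∈ N := by
    rcases eq_or_ne c 0 with rfl | hc
    · simpa only [transvection_coeff_zero, map_one] using N.one_mem
    · exact hN.mem_of_isConj (isConj_toGL_transvection_zero_one ht hc) htN
  refine SL2.transvection_induction (fun A ↦ toGL A ∈ N) (fun i j hij c ↦ ?_)
    (fun A B hA hB ↦ by simpa only [map_mul] using N.mul_mem hA hB) A
  fin_cases i
  · obtain rfl : j = 1 := by fin_cases j <;> tauto
    exact hupper c
  · obtain rfl : j = 0 := by fin_cases j <;> tauto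
    exact hN.mem_of_isConj (isConj_toGL_transvection_zero_one_one_zero c) (hupper c)

end

theorem normal_subgroup_contains_SL2_general (F : Type*) [Field F]
    (N : Subgroup (GL (Fin 2) F)) (hN : N.Normal)
    (hu : ∃ t : F, t ≠ 0 ∧ ∃ u ∈ N, (u : Matrix (Fin 2) (Fin 2) F) = !![1, t; 0, 1]) :
    ∀ M : GL (Fin 2) F, (M : Matrix (Fin 2) (Fin 2) F).det = 1 → M ∈ N := by
  obtain ⟨t, ht, u, huN, hu⟩ := hu
  have htN : toGL (transvection zero_ne_one t) ∈ N := by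
    rwa [show toGL (transvection zero_ne_one t) = u from
      Units.ext (hu ▸ transvection_zero_one_coe t)]
  intro M hM
  simpa only [show toGL ⟨M, hM⟩ = M from Units.ext rfl] using
    toGL_mem_of_transvection_mem hN ht htN ⟨M, hM⟩

/-- Let `F` be a finite field with `|F| ≥ 4` and `N` a normal subgroup of `GL₂(F)`
containing a nontrivial unipotent upper-triangular matrix.  Then `N ⊇ SL₂(F)`. -/
theorem normal_subgroup_contains_SL2 (F : Type*) [Field F] [Fintype F]
    (hF : 4 ≤ Fintype.card F) (N : Subgroup (GL (Fin 2) F)) (hN : N.Normal)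
    (hu : ∃ t : F, t ≠ 0 ∧ ∃ u ∈ N, (u : Matrix (Fin 2) (Fin 2) F) = !![1, t; 0, 1]) :
    ∀ M : GL (Fin 2) F, (M : Matrix (Fin 2) (Fin 2) F).det = 1 → M ∈ N :=
  normal_subgroup_contains_SL2_general F N hN hu
end
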